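/- arXiv:1105.4830 — 3 statements merged into one kernel-verified Lean document; each statement's English description precedes it below -/
import Mathlib

section
/- Let Λ be the cocharacter lattice of a split reductive group with Weyl group W, and let Λ_Q^+ be the (rational) positive Weyl chamber. If x lies in a W-invariant convex subset S of Λ_Q that contains the orbit Wx, then the orthogonal projection of x onto any face of the positive Weyl chamber also lies in S. In particular, for any fan Σ supported in Λ_Q^+ whose W-orbit WΣ has convex support, the projection of any element of |Σ| onto any face of the positive Weyl chamber is contained in |WΣ| ∩ Λ_Q^+. -/
/-!
Let `U = span (α '' I)` and `p` the projection of `x` onto `Uᗮ`. The subgroup `G ≤ W` generated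
by the reflections in the `α i`, `i ∈ I`, fixes `Uᗮ` pointwise, so the orbit `G x` lies in
`p + U`. Every group of linear isometries of a finite-dimensional space has a fixed point in the
convex hull of each orbit: the point of minimal norm of the compact convex set
`conv (closure (G x))` is fixed, and a fixed point of this set already lies in `conv (G x)`,
because each supporting functional at it is constant on `G x`. The only point of `p + U` fixed by
the reflections is `p`, hence `p ∈ conv (G x) ⊆ S`.
-/

open scoped RealInnerProductSpace

open Set

theorem IsCompact.convexHull {E : Type*} [NormedAddCommGroup E] [NormedSpace ℝ E]
    [FiniteDimensional ℝ E] {s : Set E} (hs : IsCompact s) : IsCompact (convexHull ℝ s) := by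
  rcases s.eq_empty_or_nonempty with rfl | ⟨x₀, hx₀⟩
  · simp
  set n := Module.finrank ℝ E + 1
  -- Carathéodory: each point of the hull is a convex combination of `n` points of `s`.
  suffices _root_.convexHull ℝ s =
      (fun q : (Fin n → ℝ) × (Fin n → E) => ∑ i, q.1 i • q.2 i) ''
        (stdSimplex ℝ (Fin n) ×ˢ univ.pi fun _ => s) by
    rw [this]
    exact ((isCompact_stdSimplex ℝ _).prod (isCompact_univ_pi fun _ => hs)).image (by fun_prop)
  refine Subset.antisymm (fun x hx => ?_) ?_
  · obtain ⟨ι, _, z, w, hzs, hz, hw0, hw1, rfl⟩ := eq_pos_convex_span_of_mem_convexHull hx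
    obtain ⟨e⟩ : Nonempty (ι ↪ Fin n) :=
      Function.Embedding.nonempty_of_card_le (by
        simpa [n] using hz.card_le_finrank_succ.trans (by simpa using Submodule.finrank_le _))
    have hzero : ∀ j ∉ range e, Function.extend e w 0 j = 0 :=
      fun j hj => Function.extend_apply' _ _ _ fun ⟨i, hi⟩ => hj ⟨i, hi⟩
    refine ⟨(Function.extend e w 0, Function.extend e z fun _ => x₀), ⟨⟨fun j => ?_, ?_⟩,
      fun j _ => ?_⟩, ?_⟩
    · by_cases hj : j ∈ range e
      · obtain ⟨i, rfl⟩ := hj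
        simpa [e.injective.extend_apply] using (hw0 i).le
      · simp [hzero j hj]
    · rw [← hw1]
      exact (Fintype.sum_of_injective e e.injective _ _ hzero
        fun i => (e.injective.extend_apply _ _ i).symm).symm
    · by_cases hj : j ∈ range e
      · obtain ⟨i, rfl⟩ := hj
        simpa [e.injective.extend_apply] using hzs ⟨i, rfl⟩
      · simpa [Function.extend_apply' _ _ _ fun ⟨i, hi⟩ => hj ⟨i, hi⟩] using hx₀
    · exact (Fintype.sum_of_injective e e.injective _ _ (fun j hj => by simp [hzero j hj])
        fun i => by simp [e.injective.extend_apply]).symm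
  · rintro - ⟨⟨w, z⟩, ⟨⟨hw0, hw1⟩, hz⟩, rfl⟩
    exact (convex_convexHull ℝ s).sum_mem (fun i _ => hw0 i) hw1
      fun i _ => subset_convexHull ℝ s (hz i (mem_univ i))

theorem Set.MapsTo.convexHull {𝕜 E F : Type*} [Semiring 𝕜] [PartialOrder 𝕜] [AddCommMonoid E]
    [Module 𝕜 E] [AddCommMonoid F] [Module 𝕜 F] {f : E →ₗ[𝕜] F} {s : Set E} {t : Set F}
    (h : MapsTo f s t) : MapsTo f (convexHull 𝕜 s) (convexHull 𝕜 t) := by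
  rw [mapsTo_iff_image_subset, LinearMap.image_convexHull]
  exact convexHull_mono h.image_subset

theorem exists_mem_forall_map_eq_of_mem_convexHull {𝕜 E : Type*} [Field 𝕜] [LinearOrder 𝕜]
    [IsStrictOrderedRing 𝕜] [AddCommGroup E] [Module 𝕜 E] {s : Set E} {q : E}
    (hq : q ∈ convexHull 𝕜 s) : ∃ ω ∈ s, ∀ f : E →ₗ[𝕜] 𝕜, (∀ y ∈ s, f q ≤ f y) → f ω = f q := by
  obtain ⟨ι, _, z, w, hzs, -, hw0, hw1, rfl⟩ := eq_pos_convex_span_of_mem_convexHull hq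
  obtain ⟨i₀⟩ : Nonempty ι := by
    by_contra h
    simp [not_nonempty_iff.mp h] at hw1
  refine ⟨z i₀, hzs ⟨i₀, rfl⟩, fun f hf => ?_⟩
  have hsum : ∑ i, w i * (f (z i) - f (∑ j, w j • z j)) = 0 := by
    simp [mul_sub, ← Finset.sum_mul, hw1]
  have hterm := (Finset.sum_eq_zero_iff_of_nonneg fun i _ => mul_nonneg (hw0 i).le
    (sub_nonneg.2 (hf _ (hzs ⟨i, rfl⟩)))).1 hsum i₀ (Finset.mem_univ _)
  linarith [(mul_eq_zero.1 hterm).resolve_left (hw0 i₀).ne']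

section SupportingFunctionals

variable {E : Type*} [NormedAddCommGroup E] [NormedSpace ℝ E] [FiniteDimensional ℝ E]
  {D : Set E} {p : E}

theorem mem_affineSpan_of_forall_le_imp_eq (hne : D.Nonempty)
    (h : ∀ f : StrongDual ℝ E, (∀ d ∈ D, f p ≤ f d) → ∀ d ∈ D, f d = f p) :
    p ∈ affineSpan ℝ D := by
  by_contra hp
  obtain ⟨f, u, hfp, hfD⟩ := geometric_hahn_banach_point_closed (affineSpan ℝ D).convex
    (affineSpan ℝ D).closed_of_finiteDimensional hp
  obtain ⟨d, hd⟩ := hne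
  have hfd := hfD d (subset_affineSpan ℝ D hd)
  linarith [h f (fun d hd => (hfp.trans (hfD d (subset_affineSpan ℝ D hd))).le) d hd]

theorem Convex.mem_of_forall_le_imp_eq_of_affineSpan_eq_top (hD : Convex ℝ D)
    (hspan : affineSpan ℝ D = ⊤)
    (h : ∀ f : StrongDual ℝ E, (∀ d ∈ D, f p ≤ f d) → ∀ d ∈ D, f d = f p) :
    p ∈ D := by
  by_contra hp
  obtain ⟨f, hf0, hfp⟩ := geometric_hahn_banach_of_nonempty_interior_point hD
    (fun h' => hp (interior_subset h')) (hD.interior_nonempty_iff_affineSpan_eq_top.2 hspan)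
  have hconst := h (-f) (by simpa using hfp)
  have hker : vectorSpan ℝ D ≤ LinearMap.ker (f : E →ₗ[ℝ] ℝ) := by
    rw [vectorSpan_def, Submodule.span_le]
    rintro - ⟨a, ha, b, hb, rfl⟩
    simpa [sub_eq_zero] using (hconst a ha).trans (hconst b hb).symm
  rw [← direction_affineSpan, hspan, AffineSubspace.direction_top, top_le_iff,
    LinearMap.ker_eq_top] at hker
  exact hf0 (ContinuousLinearMap.coe_injective hker)

theorem Convex.zero_mem_of_forall_nonneg_imp_eq_zero (hD : Convex ℝ D) (hne : D.Nonempty)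
    (h : ∀ f : StrongDual ℝ E, (∀ d ∈ D, 0 ≤ f d) → ∀ d ∈ D, f d = 0) :
    (0 : E) ∈ D := by
  set M := Submodule.span ℝ D
  have hDM : D ⊆ M := Submodule.subset_span
  set D' : Set M := (↑) ⁻¹' D
  have h' : ∀ f : StrongDual ℝ M, (∀ d ∈ D', f 0 ≤ f d) → ∀ d ∈ D', f d = f 0 := by
    intro f hf d hd
    obtain ⟨F, hF, -⟩ := exists_extension_norm_eq M f
    have hFD : ∀ d ∈ D, 0 ≤ F d := fun d hd => by simpa [hF ⟨d, hDM hd⟩] using hf _ hd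
    simpa [hF] using h F hFD d hd
  have hne' : D'.Nonempty := let ⟨d, hd⟩ := hne; ⟨⟨d, hDM hd⟩, hd⟩
  have htop : affineSpan ℝ D' = ⊤ := by
    rw [← affineSpan_insert_eq_affineSpan ℝ (mem_affineSpan_of_forall_le_imp_eq hne' h')]
    refine SetLike.coe_injective ?_
    rw [affineSpan_insert_zero, Submodule.span_span_coe_preimage]
    rfl
  exact (hD.linear_preimage M.subtype).mem_of_forall_le_imp_eq_of_affineSpan_eq_top htop h'

theorem Convex.mem_of_forall_le_imp_eq (hD : Convex ℝ D) (hne : D.Nonempty)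
    (h : ∀ f : StrongDual ℝ E, (∀ d ∈ D, f p ≤ f d) → ∀ d ∈ D, f d = f p) :
    p ∈ D := by
  have := (hD.vadd (-p)).zero_mem_of_forall_nonneg_imp_eq_zero (hne.vadd_set (a := -p)) ?_
  · simpa [Set.mem_vadd_set_iff_neg_vadd_mem] using this
  rintro f hf - ⟨d, hd, rfl⟩
  have := h f (fun d hd => by simpa [add_comm] using hf _ ⟨d, hd, rfl⟩) d hd
  simp [this]

end SupportingFunctionals

section IsometryGroup

variable {V : Type*} [NormedAddCommGroup V] [InnerProductSpace ℝ V]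

def isometryOrbit (G : Subgroup (V ≃ₗᵢ[ℝ] V)) (x : V) : Set V :=
  (fun g : V ≃ₗᵢ[ℝ] V => g x) '' G

def isometryFixingSubgroup (s : Set V) : Subgroup (V ≃ₗᵢ[ℝ] V) where
  carrier := {g | ∀ w ∈ s, g w = w}
  mul_mem' {g h} hg hh w hw := by simp [hh w hw, hg w hw]
  one_mem' _ _ := rfl
  inv_mem' {g} hg w hw := by
    conv_lhs => rw [← hg w hw]
    exact g.symm_apply_apply w

variable {G : Subgroup (V ≃ₗᵢ[ℝ] V)}

theorem self_mem_isometryOrbit (x : V) : x ∈ isometryOrbit G x := ⟨1, G.one_mem, rfl⟩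

theorem mapsTo_isometryOrbit {g : V ≃ₗᵢ[ℝ] V} (hg : g ∈ G) (x : V) :
    MapsTo g (isometryOrbit G x) (isometryOrbit G x) := by
  rintro - ⟨h, hh, rfl⟩
  exact ⟨g * h, mul_mem hg hh, rfl⟩

theorem isometryOrbit_subset_closure {x y : V} (h : x ∈ closure (isometryOrbit G y)) :
    isometryOrbit G x ⊆ closure (isometryOrbit G y) := by
  rintro - ⟨g, hg, rfl⟩
  exact (mapsTo_isometryOrbit hg y).closure g.continuous h

theorem mem_closure_isometryOrbit_comm {x y : V} (h : y ∈ closure (isometryOrbit G x)) :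
    x ∈ closure (isometryOrbit G y) := by
  rw [Metric.mem_closure_iff] at h ⊢
  intro ε hε
  obtain ⟨-, ⟨g, hg, rfl⟩, hgx⟩ := h ε hε
  refine ⟨g⁻¹ y, ⟨g⁻¹, inv_mem hg, rfl⟩, ?_⟩
  rwa [← g.dist_map, show g (g⁻¹ y) = y from g.apply_symm_apply y, dist_comm]

theorem exists_mem_fixed_of_isClosed_of_convex [CompleteSpace V] {K : Set V} (hne : K.Nonempty)
    (hclosed : IsClosed K) (hconv : Convex ℝ K) (hK : ∀ g ∈ G, MapsTo g K K) :
    ∃ q ∈ K, ∀ g ∈ G, g q = q := by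
  obtain ⟨q, hqK, hq⟩ := exists_norm_eq_iInf_of_complete_convex hne hclosed.isComplete hconv 0
  refine ⟨q, hqK, fun g hg => ?_⟩
  have hgqK := hK g hg hqK
  have h₁ := (norm_eq_iInf_iff_real_inner_le_zero hconv hqK).1 hq (g q) hgqK
  have h₂ :=
    (norm_eq_iInf_iff_real_inner_le_zero hconv hgqK (u := 0)).1 (by simpa using hq) q hqK
  have hsq : ⟪g q - q, g q - q⟫ = ⟪0 - q, g q - q⟫ + ⟪0 - g q, q - g q⟫ := by
    simp only [inner_sub_left, inner_sub_right, inner_zero_left, real_inner_comm q (g q)]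
    ring
  exact sub_eq_zero.1 (real_inner_self_nonpos.1 (hsq ▸ add_nonpos h₁ h₂))

theorem mapsTo_of_mem_isometryFixingSubgroup_orthogonal {K : Submodule ℝ V}
    [K.HasOrthogonalProjection] {g : V ≃ₗᵢ[ℝ] V}
    (hg : g ∈ isometryFixingSubgroup (Kᗮ : Set V)) : MapsTo g K K := by
  intro u hu
  rw [← K.orthogonal_orthogonal]
  intro w hw
  rw [← hg w hw, g.inner_map_map]
  exact Submodule.inner_left_of_mem_orthogonal hu hw

theorem convexHull_isometryOrbit_subset_mk' {K : Submodule ℝ V} [K.HasOrthogonalProjection]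
    (hG : G ≤ isometryFixingSubgroup (Kᗮ : Set V)) (x : V) :
    convexHull ℝ (isometryOrbit G x) ⊆ AffineSubspace.mk' (Kᗮ.starProjection x) K := by
  refine convexHull_min ?_ (AffineSubspace.convex _)
  rintro - ⟨g, hg, rfl⟩
  rw [SetLike.mem_coe, AffineSubspace.mem_mk', vsub_eq_sub]
  have hxp : x - Kᗮ.starProjection x ∈ K := by
    simpa only [K.orthogonal_orthogonal] using Kᗮ.sub_starProjection_mem_orthogonal x
  have := mapsTo_of_mem_isometryFixingSubgroup_orthogonal (hG hg) hxp
  rwa [map_sub, hG hg _ (Kᗮ.starProjection_apply_mem x)] at this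

theorem closure_reflection_le_isometryFixingSubgroup (s : Set V) :
    Subgroup.closure ((fun a => (ℝ ∙ a)ᗮ.reflection) '' s) ≤
      isometryFixingSubgroup ((Submodule.span ℝ s)ᗮ : Set V) := by
  rw [Subgroup.closure_le]
  rintro - ⟨a, ha, rfl⟩ w hw
  exact Submodule.reflection_mem_subspace_eq_self (Submodule.orthogonal_le
    ((Submodule.span_singleton_le_iff_mem _ _).2 (Submodule.subset_span ha)) hw)

theorem mem_orthogonal_span_of_forall_reflection_eq {s : Set V} {v : V}
    (h : ∀ a ∈ s, (ℝ ∙ a)ᗮ.reflection v = v) : v ∈ (Submodule.span ℝ s)ᗮ := by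
  refine Submodule.orthogonal_le (Submodule.span_le.2 fun a ha => ?_)
    (Submodule.le_orthogonal_orthogonal _ (Submodule.mem_span_singleton_self v))
  rw [SetLike.mem_coe, Submodule.mem_orthogonal_singleton_iff_inner_right, real_inner_comm]
  exact Submodule.mem_orthogonal_singleton_iff_inner_right.1
    ((Submodule.reflection_eq_self_iff v).1 (h a ha))

variable [FiniteDimensional ℝ V]

theorem mem_convexHull_isometryOrbit_of_fixed {x q : V} (hq : ∀ g ∈ G, g q = q)
    (hqx : q ∈ convexHull ℝ (closure (isometryOrbit G x))) :
    q ∈ convexHull ℝ (isometryOrbit G x) := by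
  -- `ω` lies on every supporting hyperplane at `q`, hence so does its orbit; since `x` is in the
  -- orbit closure of `ω`, the orbit of `x` lies there as well.
  obtain ⟨ω, hω, hωq⟩ := exists_mem_forall_map_eq_of_mem_convexHull hqx
  refine (convex_convexHull ℝ _).mem_of_forall_le_imp_eq ⟨x, subset_convexHull ℝ _
    (self_mem_isometryOrbit x)⟩ fun f hf => ?_
  have hcl : ∀ y ∈ closure (isometryOrbit G x), f q ≤ f y :=
    closure_minimal (fun y hy => hf y (subset_convexHull ℝ _ hy))
      (isClosed_le continuous_const f.continuous)
  have hfω : isometryOrbit G ω ⊆ f ⁻¹' {f q} := by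
    rintro - ⟨g, hg, rfl⟩
    have := hωq ((f : V →ₗ[ℝ] ℝ) ∘ₗ g.toLinearEquiv.toLinearMap)
      fun y hy => by
        simpa [hq g hg] using hcl _ ((mapsTo_isometryOrbit hg x).closure g.continuous hy)
    simpa [hq g hg] using this
  have hfx : isometryOrbit G x ⊆ f ⁻¹' {f q} :=
    (isometryOrbit_subset_closure (mem_closure_isometryOrbit_comm hω)).trans
      (closure_minimal hfω (isClosed_singleton.preimage f.continuous))
  exact convexHull_min hfx ((convex_singleton _).linear_preimage (f : V →ₗ[ℝ] ℝ))

theorem exists_fixed_mem_convexHull_isometryOrbit (G : Subgroup (V ≃ₗᵢ[ℝ] V)) (x : V) :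
    ∃ q ∈ convexHull ℝ (isometryOrbit G x), ∀ g ∈ G, g q = q := by
  have hbdd : Bornology.IsBounded (isometryOrbit G x) := by
    refine (Metric.isBounded_sphere (x := (0 : V)) (r := ‖x‖)).subset ?_
    rintro - ⟨g, -, rfl⟩
    simp
  have hcomp : IsCompact (convexHull ℝ (closure (isometryOrbit G x))) :=
    hbdd.isCompact_closure.convexHull
  obtain ⟨q, hqK, hq⟩ := exists_mem_fixed_of_isClosed_of_convex
    ⟨x, subset_convexHull ℝ _ (subset_closure (self_mem_isometryOrbit x))⟩
    hcomp.isClosed (convex_convexHull ℝ _) fun g hg =>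
      ((mapsTo_isometryOrbit hg x).closure g.continuous).convexHull
        (f := g.toLinearEquiv.toLinearMap)
  exact ⟨q, mem_convexHull_isometryOrbit_of_fixed hq hqK, hq⟩

end IsometryGroup

theorem projection_onto_face_mem_of_convex_invariant_general
    {V : Type*} [NormedAddCommGroup V] [InnerProductSpace ℝ V] [FiniteDimensional ℝ V]
    {ι : Type*} (α : ι → V)
    (W : Subgroup (V ≃ₗᵢ[ℝ] V))
    (hW : W = Subgroup.closure (Set.range fun i : ι => Submodule.reflection ((ℝ ∙ α i)ᗮ)))
    (S : Set V) (hconv : Convex ℝ S)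
    (x : V)
    (horb : ∀ w ∈ W, w x ∈ S)  -- `S` contains the orbit `W x`
    (I : Set ι) :
    ((Submodule.orthogonalProjectionOnto ((Submodule.span ℝ (α '' I))ᗮ) x : V) ∈ S) := by
  set U := Submodule.span ℝ (α '' I)
  set G := Subgroup.closure ((fun a => (ℝ ∙ a)ᗮ.reflection) '' (α '' I))
  have hGW : G ≤ W :=
    hW ▸ Subgroup.closure_mono (by rintro - ⟨-, ⟨i, -, rfl⟩, rfl⟩; exact ⟨i, rfl⟩)
  have hGU : G ≤ isometryFixingSubgroup (Uᗮ : Set V) :=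
    closure_reflection_le_isometryFixingSubgroup _
  obtain ⟨q, hq, hqG⟩ := exists_fixed_mem_convexHull_isometryOrbit G x
  have hqp : q = Uᗮ.starProjection x := by
    have hqpU := AffineSubspace.mem_mk'.1 (convexHull_isometryOrbit_subset_mk' hGU x hq)
    have hqpU' : q - Uᗮ.starProjection x ∈ Uᗮ := by
      refine mem_orthogonal_span_of_forall_reflection_eq fun a ha => ?_
      have hr : (ℝ ∙ a)ᗮ.reflection ∈ G := Subgroup.subset_closure ⟨a, ha, rfl⟩
      rw [map_sub, hqG _ hr, hGU hr _ (Uᗮ.starProjection_apply_mem x)]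
    exact sub_eq_zero.1 (Submodule.disjoint_def.1 U.orthogonal_disjoint _ hqpU hqpU')
  rw [Submodule.coe_orthogonalProjectionOnto_apply, ← hqp]
  refine convexHull_min ?_ hconv hq
  rintro - ⟨g, hg, rfl⟩
  exact horb g (hGW hg)

theorem projection_onto_face_mem_of_convex_invariant
    {V : Type*} [NormedAddCommGroup V] [InnerProductSpace ℝ V] [FiniteDimensional ℝ V]
    {ι : Type*} (α : ι → V) (hα : ∀ i, α i ≠ 0)
    (W : Subgroup (V ≃ₗᵢ[ℝ] V))
    (hW : W = Subgroup.closure (Set.range fun i : ι => Submodule.reflection ((ℝ ∙ α i)ᗮ)))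
    (S : Set V) (hconv : Convex ℝ S)
    (hinv : ∀ w ∈ W, ∀ v ∈ S, w v ∈ S)
    (x : V) (hx : x ∈ S)
    (horb : ∀ w ∈ W, w x ∈ S)  -- `S` contains the orbit `W x`
    (I : Set ι) :
    ((Submodule.orthogonalProjectionOnto ((Submodule.span ℝ (α '' I))ᗮ) x : V) ∈ S) :=
  projection_onto_face_mem_of_convex_invariant_general α W hW S hconv x horb I
end

section
/- Let E = E(β) be the framed G-bundle chain on the standard chain C_n with splitting type β = (β_1,…,β_n) ∈ Λ^n. Then the space of framed infinitesimal automorphisms T^0_E = H^0(ad E(−p_+ − p_-)) vanishes if and only if β_1,…,β_n all lie in a common Weyl chamber of Λ ⊗ Q. -/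
/-!
STATEMENT 8: Let `E = E(β)` be the framed `G`-bundle chain on the standard chain
`C_n` with splitting type `β = (β₁,…,β_n) ∈ Λⁿ`.  Then the space of framed
infinitesimal automorphisms `T⁰_E = H⁰(ad E(-p₊-p₋))` vanishes iff `β₁,…,β_n` all
lie in a common Weyl chamber of `Λ ⊗ ℚ`.

Setup: `Λ` is the cocharacter lattice; the roots of `G` are a finite set `Φ` of
linear functionals on `Λ` (pairings `α·(-)`), closed under negation.  The adjoint
bundle splits as `ad E ≅ O^r ⊕ ⊕_{α∈Φ} L_α` with
`L_α ≅ O(0|α·β₁|…|α·β_n|0)`, so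
`H⁰(ad E(-p)) = H⁰(O(-1|0|…|0|1))^r ⊕ ⊕_α H⁰(O(-1|α·β₁|…|α·β_n|1))`.
Invariant sections of an equivariant line bundle on the chain are modelled
concretely by `IsInvSection` (a coefficient on each component, subject to the weight
inequalities and matching at the nodes).  "The `β_i` lie in a common Weyl chamber"
means that no root strictly separates them: for every root `α`, either
`α·β_i ≥ 0` for all `i` or `α·β_i ≤ 0` for all `i` (Weyl chambers being the closures
of the complements of the root hyperplanes).
-/

/-- Invariant global sections of the equivariant line bundle `O(b₀|…|b_{n+1})` on the
standard chain, in coefficient form. -/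
def IsInvSection (n : ℕ) {k : Type*} [Field k]
    (b : Fin (n + 2) → ℤ) (s : Fin (n + 1) → k) : Prop :=
  (∀ c : Fin (n + 1), s c ≠ 0 → 0 ≤ b c.castSucc ∧ b c.succ ≤ 0) ∧
  (∀ c : Fin n, b c.succ.castSucc = 0 → s c.castSucc = s c.succ)

/-- The weight tuple `(-1 | α·β₁ | … | α·β_n | 1)` of `L_α(-p₊-p₋)`. -/
def rootWeights {n : ℕ} {Λ : Type*} [AddCommGroup Λ]
    (α : Λ →+ ℤ) (β : Fin n → Λ) : Fin (n + 2) → ℤ :=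
  Fin.cons (-1) (Fin.snoc (fun i => α (β i)) 1)

lemma rootWeights_zero {n : ℕ} {Λ : Type*} [AddCommGroup Λ]
    (α : Λ →+ ℤ) (β : Fin n → Λ) : rootWeights α β 0 = -1 := rfl

lemma rootWeights_last {n : ℕ} {Λ : Type*} [AddCommGroup Λ]
    (α : Λ →+ ℤ) (β : Fin n → Λ) : rootWeights α β (Fin.last (n+1)) = 1 := by
  rw [rootWeights, ← Fin.succ_last, Fin.cons_succ, Fin.snoc_last]

lemma rootWeights_mid {n : ℕ} {Λ : Type*} [AddCommGroup Λ]
    (α : Λ →+ ℤ) (β : Fin n → Λ) (i : Fin n) :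
    rootWeights α β i.succ.castSucc = α (β i) := by
  rw [rootWeights, ← Fin.succ_castSucc, Fin.cons_succ, Fin.snoc_castSucc]

lemma vanish_of_nonneg (n : ℕ) {k : Type*} [Field k] {Λ : Type*} [AddCommGroup Λ]
    (α : Λ →+ ℤ) (β : Fin n → Λ) (h : ∀ i, 0 ≤ α (β i))
    (s : Fin (n+1) → k) (hs : IsInvSection n (rootWeights α β) s) : s = 0 := by
  obtain ⟨h1, h2⟩ := hs
  funext c
  show s c = 0
  induction c using Fin.reverseInduction with
  | last =>
    by_contra hne
    have hb := (h1 _ hne).2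
    rw [Fin.succ_last, rootWeights_last] at hb
    omega
  | cast i ih =>
    by_contra hne
    have hb := (h1 _ hne).2
    rw [Fin.succ_castSucc, rootWeights_mid] at hb
    have hz : rootWeights α β i.succ.castSucc = 0 := by
      rw [rootWeights_mid]; exact le_antisymm hb (h i)
    exact hne ((h2 i hz).trans ih)

lemma vanish_of_nonpos (n : ℕ) {k : Type*} [Field k] {Λ : Type*} [AddCommGroup Λ]
    (α : Λ →+ ℤ) (β : Fin n → Λ) (h : ∀ i, α (β i) ≤ 0)
    (s : Fin (n+1) → k) (hs : IsInvSection n (rootWeights α β) s) : s = 0 := by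
  obtain ⟨h1, h2⟩ := hs
  funext c
  show s c = 0
  induction c using Fin.induction with
  | zero =>
    by_contra hne
    have hb := (h1 _ hne).1
    rw [Fin.castSucc_zero, rootWeights_zero] at hb
    omega
  | succ i ih =>
    by_contra hne
    have hb := (h1 _ hne).1
    rw [rootWeights_mid] at hb
    have hz : rootWeights α β i.succ.castSucc = 0 := by
      rw [rootWeights_mid]; exact le_antisymm (h i) hb
    exact hne ((h2 i hz).symm.trans ih)

lemma exists_nonzero_section (n : ℕ) {k : Type*} [Field k] {Λ : Type*} [AddCommGroup Λ]
    (α : Λ →+ ℤ) (β : Fin n → Λ) (i j : Fin n) (hij : i < j)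
    (hi : 0 < α (β i)) (hj : α (β j) < 0) :
    ∃ s : Fin (n+1) → k, IsInvSection n (rootWeights α β) s ∧ s ≠ 0 := by
  classical
  have hT : (Finset.univ.filter (fun m : Fin n => m < j ∧ 0 < α (β m))).Nonempty :=
    ⟨i, by simp [hij, hi]⟩
  set i' := (Finset.univ.filter (fun m : Fin n => m < j ∧ 0 < α (β m))).max' hT with hi'def
  have hi'mem := Finset.max'_mem _ hT
  rw [Finset.mem_filter] at hi'mem
  have hi'lt : i' < j := hi'mem.2.1
  have hi'pos : 0 < α (β i') := hi'mem.2.2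
  have hi'max : ∀ m, m < j → 0 < α (β m) → m ≤ i' := fun m h1 h2 =>
    Finset.le_max' _ m (by simp [h1, h2])
  have hU : (Finset.univ.filter (fun m : Fin n => i' < m ∧ α (β m) < 0)).Nonempty :=
    ⟨j, by simp [hi'lt, hj]⟩
  set j' := (Finset.univ.filter (fun m : Fin n => i' < m ∧ α (β m) < 0)).min' hU with hj'def
  have hj'mem := Finset.min'_mem _ hU
  rw [Finset.mem_filter] at hj'mem
  have hj'gt : i' < j' := hj'mem.2.1
  have hj'neg : α (β j') < 0 := hj'mem.2.2
  have hj'min : ∀ m, i' < m → α (β m) < 0 → j' ≤ m := fun m h1 h2 =>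
    Finset.min'_le _ m (by simp [h1, h2])
  have hj'le : j' ≤ j := hj'min j hi'lt hj
  have hmid : ∀ m : Fin n, i' < m → m < j' → α (β m) = 0 := by
    intro m h1 h2
    rcases lt_trichotomy (α (β m)) 0 with h | h | h
    · exact absurd (hj'min m h1 h) (not_le.mpr h2)
    · exact h
    · exact absurd (hi'max m (lt_of_lt_of_le h2 hj'le) h) (not_le.mpr h1)
  have hiv : (i' : ℕ) < (j' : ℕ) := hj'gt
  have hjn : (j' : ℕ) < n := j'.isLt
  refine ⟨fun c => if (i' : ℕ) < (c : ℕ) ∧ (c : ℕ) ≤ (j' : ℕ) then 1 else 0, ⟨?_, ?_⟩, ?_⟩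
  · intro c hc
    by_cases hcond : (i' : ℕ) < (c : ℕ) ∧ (c : ℕ) ≤ (j' : ℕ)
    swap
    · simp [hcond] at hc
    obtain ⟨hc1, hc2⟩ := hcond
    have hcn : (c : ℕ) - 1 < n := by omega
    have hcn' : (c : ℕ) < n := by omega
    constructor
    · have hcast : c.castSucc = (⟨(c : ℕ) - 1, hcn⟩ : Fin n).succ.castSucc := by
        ext
        simp only [Fin.coe_castSucc, Fin.val_succ]
        omega
      rw [hcast, rootWeights_mid]
      by_cases he : (c : ℕ) - 1 = (i' : ℕ)
      · have : (⟨(c : ℕ) - 1, hcn⟩ : Fin n) = i' := Fin.ext he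
        rw [this]
        exact le_of_lt hi'pos
      · rw [hmid ⟨(c : ℕ) - 1, hcn⟩ (by rw [Fin.lt_def]; simp; omega)
          (by rw [Fin.lt_def]; simp; omega)]
    · have hsucc : c.succ = (⟨(c : ℕ), hcn'⟩ : Fin n).succ.castSucc := by
        ext
        simp only [Fin.val_succ, Fin.coe_castSucc]
      rw [hsucc, rootWeights_mid]
      by_cases he : (c : ℕ) = (j' : ℕ)
      · have : (⟨(c : ℕ), hcn'⟩ : Fin n) = j' := Fin.ext he
        rw [this]
        exact le_of_lt hj'neg
      · rw [hmid ⟨(c : ℕ), hcn'⟩ (by rw [Fin.lt_def]; simp; omega)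
          (by rw [Fin.lt_def]; simp; omega)]
  · intro c hc
    rw [rootWeights_mid] at hc
    have hci : (c : ℕ) ≠ (i' : ℕ) := by
      intro h
      have : c = i' := Fin.ext h
      rw [this] at hc
      omega
    have hcj : (c : ℕ) ≠ (j' : ℕ) := by
      intro h
      have : c = j' := Fin.ext h
      rw [this] at hc
      omega
    have hiff : ((i' : ℕ) < (c.castSucc : ℕ) ∧ (c.castSucc : ℕ) ≤ (j' : ℕ)) ↔
        ((i' : ℕ) < (c.succ : ℕ) ∧ (c.succ : ℕ) ≤ (j' : ℕ)) := by
      simp only [Fin.coe_castSucc, Fin.val_succ]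
      omega
    exact if_congr hiff rfl rfl
  · intro h0
    have := congrFun h0 i'.succ
    rw [if_pos ⟨by simp, by simp [Fin.val_succ]; omega⟩] at this
    exact one_ne_zero this

theorem framed_infinitesimal_automorphisms_vanish_iff
    (n : ℕ) {k : Type*} [Field k]
    {Λ : Type*} [AddCommGroup Λ]
    (Φ : Finset (Λ →+ ℤ)) (hΦ : ∀ α ∈ Φ, -α ∈ Φ) (h0 : (0 : Λ →+ ℤ) ∉ Φ)
    (β : Fin n → Λ) :
    -- `H⁰(ad E(-p)) = 0`: the trivial summands and every root summand have no
    -- nonzero invariant sections …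
    ((∀ s : Fin (n + 1) → k,
        IsInvSection n (rootWeights (0 : Λ →+ ℤ) β) s → s = 0) ∧
     (∀ α ∈ Φ, ∀ s : Fin (n + 1) → k, IsInvSection n (rootWeights α β) s → s = 0))
    -- … iff the `β_i` lie in a common Weyl chamber:
    ↔ ∀ α ∈ Φ, (∀ i, 0 ≤ α (β i)) ∨ (∀ i, α (β i) ≤ 0) := by
  constructor
  · rintro ⟨-, H⟩ α hα
    by_contra hc
    push_neg at hc
    obtain ⟨⟨p, hp⟩, ⟨q, hq⟩⟩ := hc
    rcases lt_trichotomy p q with h | h | h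
    · obtain ⟨s, hs, hsne⟩ := exists_nonzero_section (k := k) n (-α) β p q h
        (by simpa using hp) (by simpa using hq)
      exact hsne (H (-α) (hΦ α hα) s hs)
    · subst h; omega
    · obtain ⟨s, hs, hsne⟩ := exists_nonzero_section (k := k) n α β q p h hq hp
      exact hsne (H α hα s hs)
  · intro h
    constructor
    · intro s hs
      exact vanish_of_nonneg n 0 β (fun i => by simp) s hs
    · intro α hα s hs
      rcases h α hα with h' | h'
      · exact vanish_of_nonneg n α β h' s hs
      · exact vanish_of_nonpos n α β h' s hs
end

section
/- In GL_2 cocharacter language: the G_m-equivariant rank-2 vector bundles on standard chains (with trivial weights at both endpoints) that are Σ-stable for the Kausz fan of GL_2 are exactly, up to isomorphism: O⊕O on C_0; O(−1,1)⊕O(−1,1), O(1,−1)⊕O(1,−1), O(0,0)⊕O(−1,1), O(1,−1)⊕O(0,0) on C_1; and O(1,−1,0)⊕O(0,−1,1), O(−1,1,0)⊕O(−1,0,1), O(1,0,−1)⊕O(0,1,−1) on C_2 — equivalently, exactly the bundles E ≅ O(v_1−v_0) ⊕ O(v_2−v_0) where v_0, v_1, v_2 are standard basis vectors of Z^{n+1},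 each appearing at least once, up to the GL_2 Weyl group action. -/
/-!
STATEMENT 14: Classification of the Σ-stable bundle chains for the Kausz fan of
`GL₂`, in cocharacter language.

A `𝔾ₘ`-equivariant rank-2 split vector bundle on the standard chain `C_n` with
trivial weights at both endpoints is `O(d¹) ⊕ O(d²)` with multidegrees
`d¹, d² : Fin (n+1) → ℤ` of total degree `0` on each summand.  Its splitting type is
the sequence of cocharacters at the nodes, the node `m` cocharacter being the pair
of weights `(-∑_{c ≤ m} d¹ c, -∑_{c ≤ m} d² c) ∈ ℤ²` (weights being trivial at `p₊`
and dropping by the degree across each component).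

The Kausz fan `Σ` for `GL₂` is the part of the fan of Weyl chambers of `PGL₃` lying
in the positive Weyl chamber `{a₁ ≥ a₂}` of `GL₂`: three contiguous cones with the
four rays `(1,1), (1,0), (0,-1), (-1,-1)` (primitive generators); we order the rays
as `β₁ = (1,1), β₂ = (0,-1), β₃ = (1,0), β₄ = (-1,-1)`, with the cones
`⟨(1,1),(1,0)⟩, ⟨(0,-1),(1,0)⟩, ⟨(0,-1),(-1,-1)⟩` and their faces.  The bundle is
Σ-stable iff its node cocharacter sequence is, for a single element `w` of the
`GL₂` Weyl group (`w` is the identity or the swap of the two coordinates), the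
`w`-image of an order-respecting subsequence of the rays of one cone of `Σ`.

The theorem: the Σ-stable bundles are exactly those isomorphic to
`O(v₁ - v₀) ⊕ O(v₂ - v₀)` with `v₀, v₁, v₂` standard basis vectors of `ℤ^{n+1}`,
each appearing at least once, up to the Weyl action (interchange of the two
summands); equivalently, exactly the bundles `O ⊕ O` on `C₀`;
`O(-1,1)⊕O(-1,1)`, `O(1,-1)⊕O(1,-1)`, `O(0,0)⊕O(-1,1)`, `O(1,-1)⊕O(0,0)` on `C₁`;
and `O(1,-1,0)⊕O(0,-1,1)`, `O(-1,1,0)⊕O(-1,0,1)`, `O(1,0,-1)⊕O(0,1,-1)` on `C₂`.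
-/

/-- The ordered ray generators of the Kausz fan of `GL₂`. -/
def kauszRay : Fin 4 → ℤ × ℤ := ![(1, 1), (0, -1), (1, 0), (-1, -1)]

/-- The cones of the Kausz fan of `GL₂`, as sets of ray indices (the three
two-dimensional cones and all their faces). -/
def KauszCone (S : Finset (Fin 4)) : Prop :=
  S ⊆ {0, 2} ∨ S ⊆ {1, 2} ∨ S ⊆ {1, 3}

/-- The `GL₂` Weyl group action on cocharacters: `w = true` is the transposition. -/
def weylSwap (w : Bool) (p : ℤ × ℤ) : ℤ × ℤ := if w then (p.2, p.1) else p

/-- The cocharacter of the split bundle `O(d¹) ⊕ O(d²)` at the `m`-th node: the pair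
of `𝔾ₘ`-weights there, `-∑_{c ≤ m} d c` for each summand. -/
def nodeCochar {n : ℕ} (d1 d2 : Fin (n + 1) → ℤ) (m : Fin n) : ℤ × ℤ :=
  (-(∑ c : Fin (n + 1), if (c : ℕ) ≤ (m : ℕ) then d1 c else 0),
   -(∑ c : Fin (n + 1), if (c : ℕ) ≤ (m : ℕ) then d2 c else 0))

/-- Σ-stability for the Kausz fan of `GL₂`: the node cocharacter sequence is the
image, under a single Weyl element, of an order-respecting subsequence of the rays
of one cone. -/
def KauszStable {n : ℕ} (d1 d2 : Fin (n + 1) → ℤ) : Prop :=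
  ∃ (w : Bool) (S : Finset (Fin 4)), KauszCone S ∧
    ∃ φ : Fin n → Fin 4, StrictMono φ ∧ (∀ m, φ m ∈ S) ∧
      ∀ m : Fin n, nodeCochar d1 d2 m = weylSwap w (kauszRay (φ m))

/-!
A degree-zero multidegree is determined by its partial sums, i.e. by the weights at the nodes,
so both sides of the classification are conditions on the sequence of node cocharacters, up to
the Weyl swap. For `O(v₁ - v₀) ⊕ O(v₂ - v₀)` the cocharacter at node `m` depends only on which
of the `vᵢ` lie to the left of `m`; as `m` moves right these sets increase, and the cocharacters
of the proper nonempty subsets of `{0, 1, 2}` are exactly the Weyl images of the rays of the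
Kausz fan. A strictly increasing sequence of rays inside a cone has at most two terms, and a
surjection `Fin 3 → Fin (n + 1)` forces `n ≤ 2` as well, so what is left is a finite check.
-/

open Finset

section PartialSums

variable {n : ℕ}

theorem apply_eq_sum_lt_succ_sub_sum_lt (d : Fin (n + 1) → ℤ) (c : Fin (n + 1)) :
    d c = (∑ c' : Fin (n + 1), if (c' : ℕ) < c + 1 then d c' else 0) -
      ∑ c' : Fin (n + 1), if (c' : ℕ) < c then d c' else 0 := by
  rw [← sum_sub_distrib, Fintype.sum_eq_single c fun c' hc' => ?_]
  · simp
  · rcases lt_or_gt_of_ne (Fin.val_ne_of_ne hc') with h | h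
    · simp [h, h.trans (Nat.lt_succ_self _)]
    · simp [h.not_gt, Nat.lt_succ_iff.not.2 h.not_ge]

theorem sum_ite_lt_eq_of_sum_ite_le_eq {d e : Fin (n + 1) → ℤ} (htot : ∑ c, d c = ∑ c, e c)
    (h : ∀ m : Fin n, (∑ c : Fin (n + 1), if (c : ℕ) ≤ m then d c else 0) =
      ∑ c : Fin (n + 1), if (c : ℕ) ≤ m then e c else 0) (k : ℕ) :
    (∑ c : Fin (n + 1), if (c : ℕ) < k then d c else 0) =
      ∑ c : Fin (n + 1), if (c : ℕ) < k then e c else 0 := by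
  rcases k with _ | k
  · simp
  simp only [Nat.lt_succ_iff]
  by_cases hk : k < n
  · exact h ⟨k, hk⟩
  · have hle (c : Fin (n + 1)) : (c : ℕ) ≤ k := by omega
    simpa [hle] using htot

theorem eq_of_sum_ite_le_eq {d e : Fin (n + 1) → ℤ} (htot : ∑ c, d c = ∑ c, e c)
    (h : ∀ m : Fin n, (∑ c : Fin (n + 1), if (c : ℕ) ≤ m then d c else 0) =
      ∑ c : Fin (n + 1), if (c : ℕ) ≤ m then e c else 0) :
    d = e := by
  funext c
  rw [apply_eq_sum_lt_succ_sub_sum_lt d, apply_eq_sum_lt_succ_sub_sum_lt e,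
    sum_ite_lt_eq_of_sum_ite_le_eq htot h, sum_ite_lt_eq_of_sum_ite_le_eq htot h]

end PartialSums

section NodeCochar

variable {n : ℕ}

theorem nodeCochar_eq_iff {d1 d2 e1 e2 : Fin (n + 1) → ℤ} (h1 : ∑ c, d1 c = ∑ c, e1 c)
    (h2 : ∑ c, d2 c = ∑ c, e2 c) :
    (∀ m, nodeCochar d1 d2 m = nodeCochar e1 e2 m) ↔ d1 = e1 ∧ d2 = e2 := by
  refine ⟨fun h => ?_, by rintro ⟨rfl, rfl⟩ _; rfl⟩
  simp only [nodeCochar, Prod.ext_iff, neg_inj] at h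
  exact ⟨eq_of_sum_ite_le_eq h1 fun m => (h m).1, eq_of_sum_ite_le_eq h2 fun m => (h m).2⟩

theorem weylSwap_true_nodeCochar (d1 d2 : Fin (n + 1) → ℤ) (m : Fin n) :
    weylSwap true (nodeCochar d1 d2 m) = nodeCochar d2 d1 m :=
  rfl

theorem exists_nodeCochar_eq_weylSwap_iff {d1 d2 e1 e2 : Fin (n + 1) → ℤ}
    (hd1 : ∑ c, d1 c = 0) (hd2 : ∑ c, d2 c = 0) (he1 : ∑ c, e1 c = 0)
    (he2 : ∑ c, e2 c = 0) :
    (∃ w, ∀ m, nodeCochar d1 d2 m = weylSwap w (nodeCochar e1 e2 m)) ↔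
      (d1 = e1 ∧ d2 = e2) ∨ (d1 = e2 ∧ d2 = e1) := by
  simp only [Bool.exists_bool, weylSwap_true_nodeCochar]
  rw [← nodeCochar_eq_iff (hd1.trans he1.symm) (hd2.trans he2.symm),
    ← nodeCochar_eq_iff (hd1.trans he2.symm) (hd2.trans he1.symm)]
  rfl

end NodeCochar

section Flags

variable {n : ℕ}

/-- The multidegree of `O(vₐ - v_b)` on `C_n`. -/
def stdDiff (a b : Fin (n + 1)) : Fin (n + 1) → ℤ :=
  fun c => (if c = a then 1 else 0) - (if c = b then 1 else 0)

theorem sum_stdDiff (a b : Fin (n + 1)) : ∑ c, stdDiff a b c = 0 := by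
  simp [stdDiff, sum_sub_distrib]

theorem sum_ite_le_stdDiff (a b : Fin (n + 1)) (m : Fin n) :
    (∑ c : Fin (n + 1), if (c : ℕ) ≤ m then stdDiff a b c else 0) =
      (if (a : ℕ) ≤ m then 1 else 0) - (if (b : ℕ) ≤ m then 1 else 0) := by
  rw [← Fintype.sum_ite_eq' a (fun c : Fin (n + 1) => if (c : ℕ) ≤ m then (1 : ℤ) else 0),
    ← Fintype.sum_ite_eq' b (fun c : Fin (n + 1) => if (c : ℕ) ≤ m then (1 : ℤ) else 0),
    ← sum_sub_distrib]
  refine sum_congr rfl fun c _ => ?_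
  unfold stdDiff
  split_ifs <;> simp_all

def flagCochar (v : Fin 3 → Fin (n + 1)) (m : Fin n) : ℤ × ℤ :=
  ((if (v 0 : ℕ) ≤ m then 1 else 0) - (if (v 1 : ℕ) ≤ m then 1 else 0),
   (if (v 0 : ℕ) ≤ m then 1 else 0) - (if (v 2 : ℕ) ≤ m then 1 else 0))

theorem nodeCochar_stdDiff (v : Fin 3 → Fin (n + 1)) (m : Fin n) :
    nodeCochar (stdDiff (v 1) (v 0)) (stdDiff (v 2) (v 0)) m = flagCochar v m := by
  simp only [nodeCochar, sum_ite_le_stdDiff, neg_sub, flagCochar]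

end Flags

instance Fin.decidableStrictMono {n m : ℕ} (f : Fin n → Fin m) : Decidable (StrictMono f) :=
  decidable_of_iff (∀ a b : Fin n, a < b → f a < f b) Iff.rfl

instance KauszCone.decidable (S : Finset (Fin 4)) : Decidable (KauszCone S) := by
  unfold KauszCone; infer_instance

theorem KauszCone.card_le_two {S : Finset (Fin 4)} (hS : KauszCone S) : S.card ≤ 2 := by
  rcases hS with h | h | h <;> exact (card_le_card h).trans (by decide)

theorem le_two_of_strictMono_kauszCone {n : ℕ} {S : Finset (Fin 4)} {φ : Fin n → Fin 4}
    (hS : KauszCone S) (hφ : StrictMono φ) (hφS : ∀ m, φ m ∈ S) : n ≤ 2 := by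
  simpa using (card_le_card_of_injOn (s := univ) φ (fun m _ => hφS m)
    hφ.injective.injOn).trans hS.card_le_two

theorem exists_flagCochar_of_kauszRay {n : ℕ} {S : Finset (Fin 4)} {φ : Fin n → Fin 4}
    (hS : KauszCone S) (hφ : StrictMono φ) (hφS : ∀ m, φ m ∈ S) (w : Bool) :
    ∃ (w' : Bool) (v : Fin 3 → Fin (n + 1)), Function.Surjective v ∧
      ∀ m, weylSwap w (kauszRay (φ m)) = weylSwap w' (flagCochar v m) := by
  have hn := le_two_of_strictMono_kauszCone hS hφ hφS
  interval_cases n <;> revert w φ S <;> decide +kernel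

theorem exists_kauszRay_of_flagCochar {n : ℕ} {v : Fin 3 → Fin (n + 1)}
    (hv : Function.Surjective v) (w : Bool) :
    ∃ (w' : Bool) (S : Finset (Fin 4)), KauszCone S ∧
      ∃ φ : Fin n → Fin 4, StrictMono φ ∧ (∀ m, φ m ∈ S) ∧
        ∀ m, weylSwap w (flagCochar v m) = weylSwap w' (kauszRay (φ m)) := by
  have hn : n < 3 := by simpa using Fintype.card_le_of_surjective v hv
  interval_cases n <;> revert w v <;> decide +kernel

theorem kausz_stable_bundles_classified {n : ℕ} (d1 d2 : Fin (n + 1) → ℤ)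
    (h1 : ∑ c, d1 c = 0) (h2 : ∑ c, d2 c = 0) :
    KauszStable d1 d2 ↔
      ∃ v : Fin 3 → Fin (n + 1), Function.Surjective v ∧
        ((d1 = (fun c => (if c = v 1 then 1 else 0) - (if c = v 0 then 1 else 0)) ∧
          d2 = (fun c => (if c = v 2 then 1 else 0) - (if c = v 0 then 1 else 0))) ∨
         (d1 = (fun c => (if c = v 2 then 1 else 0) - (if c = v 0 then 1 else 0)) ∧
          d2 = (fun c => (if c = v 1 then 1 else 0) - (if c = v 0 then 1 else 0)))) := by
  have split_iff (v : Fin 3 → Fin (n + 1)) :=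
    exists_nodeCochar_eq_weylSwap_iff h1 h2 (sum_stdDiff (v 1) (v 0)) (sum_stdDiff (v 2) (v 0))
  simp only [nodeCochar_stdDiff] at split_iff
  constructor
  · rintro ⟨w, S, hS, φ, hφ, hφS, hray⟩
    obtain ⟨w', v, hv, hflag⟩ := exists_flagCochar_of_kauszRay hS hφ hφS w
    exact ⟨v, hv, (split_iff v).1 ⟨w', fun m => (hray m).trans (hflag m)⟩⟩
  · rintro ⟨v, hv, hd⟩
    obtain ⟨w, hflag⟩ := (split_iff v).2 hd
    obtain ⟨w', S, hS, φ, hφ, hφS, hray⟩ := exists_kauszRay_of_flagCochar hv w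
    exact ⟨w', S, hS, φ, hφ, hφS, fun m => (hflag m).trans (hray m)⟩
end
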